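/- arXiv:2404.10285 — 2 statements merged into one kernel-verified Lean document; each statement's English description precedes it below -/
import Mathlib

section
/- Let 𝒳 : ℝ → ℝⁿ satisfy 𝒳'(t) = A𝒳(t) + B𝒱(t), and let P be symmetric. Define ℳ := −ρP + AᵀP + PA and 𝒩 := BᵀP. Then for any s ≤ s', [e^{−ρs'} 𝒳(s')‾ᵀ − e^{−ρs} 𝒳(s)‾ᵀ] vecs(P) = (∫_s^{s'} e^{−ρt} 𝒳(t)‾ᵀ dt) vecs(ℳ) + 2(∫_s^{s'} e^{−ρt} (𝒳(t)ᵀ ⊗ 𝒱(t)ᵀ) dt) vec(𝒩). -/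
/-!
Along a trajectory of `ẋ = A x + B v`, the product rule and the symmetry of `P` give
`d/dt (e^{-ρt} xᵀ P x) = e^{-ρt} (xᵀ ℳ x + 2 vᵀ 𝒩 x)`, so the fundamental theorem of calculus
expresses the increment of `e^{-ρt} xᵀ P x` as an integral. Both sides of the identity are these
scalars written in coordinates: `xᵀ S x = x̄ᵀ vecs(S)` for symmetric `S`, `vᵀ N x = (xᵀ ⊗ vᵀ) vec(N)`,
and integration commutes with taking dot products against a fixed vector.
-/

open Matrix

theorem dotProduct_mulVec_eq_sum_sum {ι κ R : Type*} [Fintype ι] [Fintype κ] [CommSemiring R]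
    (x : ι → R) (S : Matrix ι κ R) (y : κ → R) :
    x ⬝ᵥ S *ᵥ y = ∑ i, ∑ j, x i * y j * S i j := by
  simp only [dotProduct, mulVec, Finset.mul_sum]
  exact Fintype.sum_congr _ _ fun i => Fintype.sum_congr _ _ fun j => by ring

section UpperPairs

variable {ι R : Type*} [Fintype ι] [LinearOrder ι]

theorem sum_upperPairs_ite_two [Semiring R] (g : ι → ι → R) (hg : ∀ i j, g i j = g j i) :
    ∑ p : {p : ι × ι // p.1 ≤ p.2}, (if p.1.1 = p.1.2 then g p.1.1 p.1.2 else 2 * g p.1.1 p.1.2) =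
      ∑ i, ∑ j, g i j := by
  classical
  have hlower : ∑ q : ι × ι with ¬ q.1 ≤ q.2, g q.1 q.2 =
      ∑ q : ι × ι with q.1 ≤ q.2, if q.1 = q.2 then 0 else g q.1 q.2 := by
    rw [Finset.sum_ite, Finset.sum_const_zero, zero_add, Finset.filter_filter]
    refine Finset.sum_nbij' Prod.swap Prod.swap ?_ ?_ (by simp) (by simp) fun q _ => hg _ _
    · simp +contextual [le_of_lt, ne_of_lt]
    · simp +contextual [lt_of_le_of_ne]
  rw [← Finset.sum_subtype {q : ι × ι | q.1 ≤ q.2} (by simp)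
      fun q => if q.1 = q.2 then g q.1 q.2 else 2 * g q.1 q.2, ← Fintype.sum_prod_type',
    ← Finset.sum_filter_add_sum_filter_not Finset.univ (fun q : ι × ι => q.1 ≤ q.2), hlower,
    ← Finset.sum_add_distrib]
  refine Finset.sum_congr rfl fun q _ => ?_
  split_ifs <;> simp [two_mul]

variable [CommSemiring R]

def Matrix.vecs (S : Matrix ι ι R) : {p : ι × ι // p.1 ≤ p.2} → R :=
  fun p => if p.1.1 = p.1.2 then S p.1.1 p.1.2 else 2 * S p.1.1 p.1.2

/-- The vector `x̄` of the paper. -/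
def upperProducts (x : ι → R) : {p : ι × ι // p.1 ≤ p.2} → R :=
  fun p => x p.1.1 * x p.1.2

theorem upperProducts_dotProduct_vecs {S : Matrix ι ι R} (hS : S.IsSymm) (x : ι → R) :
    upperProducts x ⬝ᵥ S.vecs = x ⬝ᵥ S *ᵥ x := by
  rw [dotProduct_mulVec_eq_sum_sum, ← sum_upperPairs_ite_two _ fun i j => by
    rw [hS.apply, mul_comm (x i)]]
  refine Fintype.sum_congr _ _ fun p => ?_
  simp only [upperProducts, Matrix.vecs, mul_ite]
  ring_nf

end UpperPairs

theorem outerProduct_dotProduct_vec {ι κ R : Type*} [Fintype ι] [Fintype κ] [CommSemiring R]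
    (x : ι → R) (v : κ → R) (N : Matrix κ ι R) :
    (fun p : ι × κ => x p.1 * v p.2) ⬝ᵥ N.vec = v ⬝ᵥ N *ᵥ x := by
  rw [dotProduct_mulVec_eq_sum_sum, Finset.sum_comm, dotProduct, Fintype.sum_prod_type]
  simp only [vec, mul_comm (v _)]

theorem lyapunov_derivative_linearSystem {ι κ R : Type*} [Fintype ι] [Fintype κ] [CommRing R]
    (A : Matrix ι ι R) (B : Matrix ι κ R) {P : Matrix ι ι R} (hP : P.IsSymm) (x : ι → R)
    (v : κ → R) :
    (A *ᵥ x + B *ᵥ v) ⬝ᵥ P *ᵥ x + x ⬝ᵥ P *ᵥ (A *ᵥ x + B *ᵥ v) =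
      x ⬝ᵥ (Aᵀ * P + P * A) *ᵥ x + 2 * (v ⬝ᵥ (Bᵀ * P) *ᵥ x) := by
  have hswap : ∀ y, x ⬝ᵥ P *ᵥ y = y ⬝ᵥ P *ᵥ x := fun y => by
    rw [dotProduct_mulVec, ← mulVec_transpose, hP.eq, dotProduct_comm]
  rw [hswap, add_mulVec, dotProduct_add, ← mulVec_mulVec, ← mulVec_mulVec, ← mulVec_mulVec,
    hswap (A *ᵥ x), dotProduct_mulVec v Bᵀ, vecMul_transpose, dotProduct_mulVec x Aᵀ,
    vecMul_transpose, add_dotProduct]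
  ring

section Derivatives

variable {𝕜 : Type*} [NontriviallyNormedField 𝕜]

theorem HasDerivAt.dotProduct {ι : Type*} [Fintype ι] {f g : 𝕜 → ι → 𝕜} {f' g' : ι → 𝕜} {t : 𝕜}
    (hf : HasDerivAt f f' t) (hg : HasDerivAt g g' t) :
    HasDerivAt (fun t => f t ⬝ᵥ g t) (f' ⬝ᵥ g t + f t ⬝ᵥ g') t := by
  simp only [_root_.dotProduct, ← Finset.sum_add_distrib]
  exact HasDerivAt.fun_sum fun i _ => (hasDerivAt_pi.1 hf i).mul (hasDerivAt_pi.1 hg i)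

theorem HasDerivAt.const_mulVec {ι κ : Type*} [Fintype κ] (S : Matrix ι κ 𝕜) {f : 𝕜 → κ → 𝕜}
    {f' : κ → 𝕜} {t : 𝕜} (hf : HasDerivAt f f' t) : HasDerivAt (fun t => S *ᵥ f t) (S *ᵥ f') t :=
  hasDerivAt_pi.2 fun i => ((hasDerivAt_const t (S i)).dotProduct hf).congr_deriv (by simp [mulVec])

end Derivatives

theorem hasDerivAt_exp_mul_quadForm {ι κ : Type*} [Fintype ι] [Fintype κ] (A : Matrix ι ι ℝ)
    (B : Matrix ι κ ℝ) {P : Matrix ι ι ℝ} (hP : P.IsSymm) (ρ : ℝ) {X : ℝ → ι → ℝ} {v : κ → ℝ}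
    {t : ℝ} (hX : HasDerivAt X (A *ᵥ X t + B *ᵥ v) t) :
    HasDerivAt (fun t => Real.exp (-ρ * t) * (X t ⬝ᵥ P *ᵥ X t))
      (Real.exp (-ρ * t) * (X t ⬝ᵥ (-(ρ • P) + Aᵀ * P + P * A) *ᵥ X t) +
        2 * (Real.exp (-ρ * t) * (v ⬝ᵥ (Bᵀ * P) *ᵥ X t))) t := by
  have hexp : HasDerivAt (fun t => Real.exp (-ρ * t)) (-ρ * Real.exp (-ρ * t)) t := by
    simpa [mul_comm] using ((hasDerivAt_id t).const_mul (-ρ)).exp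
  refine (hexp.mul (hX.dotProduct (hX.const_mulVec P))).congr_deriv ?_
  rw [add_assoc (-(ρ • P)), add_mulVec, dotProduct_add, neg_mulVec, smul_mulVec, dotProduct_neg,
    dotProduct_smul, smul_eq_mul, lyapunov_derivative_linearSystem A B hP]
  ring

theorem intervalIntegral.integral_dotProduct_const {ι : Type*} [Fintype ι] {f : ℝ → ι → ℝ}
    {a b : ℝ} {μ : MeasureTheory.Measure ℝ} (hf : ∀ k, IntervalIntegrable (fun t => f t k) μ a b)
    (w : ι → ℝ) :
    (fun k => ∫ t in a..b, f t k ∂μ) ⬝ᵥ w = ∫ t in a..b, f t ⬝ᵥ w ∂μ := by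
  simp only [dotProduct, ← intervalIntegral.integral_mul_const]
  exact (intervalIntegral.integral_finsetSum fun k _ => (hf k).mul_const (w k)).symm

theorem stmt17_general {n m : ℕ} (A : Matrix (Fin n) (Fin n) ℝ) (B : Matrix (Fin n) (Fin m) ℝ) (ρ : ℝ)
    (X : ℝ → Fin n → ℝ) (V : ℝ → Fin m → ℝ) (hV : Continuous V)
    (hX : ∀ t, HasDerivAt X (A *ᵥ X t + B *ᵥ V t) t)
    (P : Matrix (Fin n) (Fin n) ℝ) (hP : P.IsSymm)
    (M : Matrix (Fin n) (Fin n) ℝ) (hM : M = -(ρ • P) + Aᵀ * P + P * A)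
    (N : Matrix (Fin m) (Fin n) ℝ) (hN : N = Bᵀ * P)
    (s s' : ℝ) :
    (fun p : {p : Fin n × Fin n // p.1 ≤ p.2} =>
        Real.exp (-ρ * s') * (X s' p.1.1 * X s' p.1.2) -
          Real.exp (-ρ * s) * (X s p.1.1 * X s p.1.2)) ⬝ᵥ
      (fun p : {p : Fin n × Fin n // p.1 ≤ p.2} =>
        if p.1.1 = p.1.2 then P p.1.1 p.1.2 else 2 * P p.1.1 p.1.2) =
    (fun p : {p : Fin n × Fin n // p.1 ≤ p.2} =>
        ∫ t in s..s', Real.exp (-ρ * t) * (X t p.1.1 * X t p.1.2)) ⬝ᵥ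
      (fun p : {p : Fin n × Fin n // p.1 ≤ p.2} =>
        if p.1.1 = p.1.2 then M p.1.1 p.1.2 else 2 * M p.1.1 p.1.2) +
    2 * ((fun p : Fin n × Fin m =>
        ∫ t in s..s', Real.exp (-ρ * t) * (X t p.1 * V t p.2)) ⬝ᵥ
      (fun p : Fin n × Fin m => N p.2 p.1)) := by
  have hXc : Continuous X := continuous_iff_continuousAt.2 fun t => (hX t).continuousAt
  have hMsymm : M.IsSymm := by
    simp only [hM, IsSymm, transpose_add, transpose_neg, transpose_smul, transpose_mul,
      transpose_transpose, hP.eq]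
    abel
  set e : ℝ → ℝ := fun t => Real.exp (-ρ * t)
  have hftc := intervalIntegral.integral_eq_sub_of_hasDerivAt (a := s) (b := s')
    (fun t _ => hM ▸ hN ▸ hasDerivAt_exp_mul_quadForm A B hP ρ (hX t))
    (Continuous.intervalIntegrable (by fun_prop) _ _)
  change (e s' • upperProducts (X s') - e s • upperProducts (X s)) ⬝ᵥ P.vecs =
    (fun p => ∫ t in s..s', (e t • upperProducts (X t)) p) ⬝ᵥ M.vecs +
      2 * ((fun p => ∫ t in s..s', (e t • fun p : Fin n × Fin m => X t p.1 * V t p.2) p) ⬝ᵥ N.vec)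
  rw [intervalIntegral.integral_dotProduct_const (f := fun t => e t • upperProducts (X t))
      fun k => Continuous.intervalIntegrable (by unfold upperProducts; fun_prop) _ _,
    intervalIntegral.integral_dotProduct_const
      (f := fun t => e t • fun p : Fin n × Fin m => X t p.1 * V t p.2)
      fun k => Continuous.intervalIntegrable (by fun_prop) _ _]
  simp only [sub_dotProduct, smul_dotProduct, upperProducts_dotProduct_vecs hP,
    upperProducts_dotProduct_vecs hMsymm, outerProduct_dotProduct_vec, smul_eq_mul]
  rw [← hftc, intervalIntegral.integral_add (Continuous.intervalIntegrable (by fun_prop) _ _)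
    (Continuous.intervalIntegrable (by fun_prop) _ _), intervalIntegral.integral_const_mul]

theorem stmt17 {n m : ℕ} (A : Matrix (Fin n) (Fin n) ℝ) (B : Matrix (Fin n) (Fin m) ℝ) (ρ : ℝ)
    (X : ℝ → Fin n → ℝ) (V : ℝ → Fin m → ℝ) (hV : Continuous V)
    (hX : ∀ t, HasDerivAt X (A *ᵥ X t + B *ᵥ V t) t)
    (P : Matrix (Fin n) (Fin n) ℝ) (hP : P.IsSymm)
    (M : Matrix (Fin n) (Fin n) ℝ) (hM : M = -(ρ • P) + Aᵀ * P + P * A)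
    (N : Matrix (Fin m) (Fin n) ℝ) (hN : N = Bᵀ * P)
    (s s' : ℝ) (hss : s ≤ s') :
    (fun p : {p : Fin n × Fin n // p.1 ≤ p.2} =>
        Real.exp (-ρ * s') * (X s' p.1.1 * X s' p.1.2) -
          Real.exp (-ρ * s) * (X s p.1.1 * X s p.1.2)) ⬝ᵥ
      (fun p : {p : Fin n × Fin n // p.1 ≤ p.2} =>
        if p.1.1 = p.1.2 then P p.1.1 p.1.2 else 2 * P p.1.1 p.1.2) =
    (fun p : {p : Fin n × Fin n // p.1 ≤ p.2} =>
        ∫ t in s..s', Real.exp (-ρ * t) * (X t p.1.1 * X t p.1.2)) ⬝ᵥ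
      (fun p : {p : Fin n × Fin n // p.1 ≤ p.2} =>
        if p.1.1 = p.1.2 then M p.1.1 p.1.2 else 2 * M p.1.1 p.1.2) +
    2 * ((fun p : Fin n × Fin m =>
        ∫ t in s..s', Real.exp (-ρ * t) * (X t p.1 * V t p.2)) ⬝ᵥ
      (fun p : Fin n × Fin m => N p.2 p.1)) :=
  stmt17_general A B ρ X V hV hX P hP M hM N hN s s'
end

section
/- Let A ∈ ℝ^{n×n} with A − (ρ/2)Iₙ Hurwitz, and let the ARE ρY = YA + AᵀY − YBR⁻¹BᵀY have a positive semidefinite solution Y such that A − BR⁻¹BᵀY − (ρ/2)Iₙ is Hurwitz. Then Y = 0. -/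
open Matrix

def IsHurwitz {n : ℕ} (M : Matrix (Fin n) (Fin n) ℝ) : Prop :=
  ∀ μ ∈ spectrum ℂ (M.map (Complex.ofReal)), μ.re < 0

/-!
Splitting `ρ Y` as `(ρ/2) Y + Y (ρ/2)` turns the discounted Riccati equation into the homogeneous
Sylvester equation `Mᵀ Y + Y N = 0`, where `M = A - B R⁻¹ Bᵀ Y - (ρ/2) I` and
`N = A - (ρ/2) I`. If `Y N = P Y` then `Y p(N) = p(P) Y` for every polynomial `p`; for `p = χ_N`
the left side vanishes by Cayley–Hamilton, while `p(P)` is invertible as soon as `P` and `N` have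
disjoint spectra. Here `P = -Mᵀ` has its spectrum in the open right half-plane and `N` in the open
left one, so `Y = 0`.
-/

open Polynomial

namespace Matrix

section CommRing

variable {R : Type*} [CommRing R] {m n : Type*} [Fintype m] [DecidableEq m] [Fintype n]
  [DecidableEq n]

theorem spectrum_transpose (M : Matrix n n R) : spectrum R Mᵀ = spectrum R M := by
  ext r
  simp only [mem_spectrum_iff_not_isUnit_eval_charpoly, charpoly_transpose]

theorem mul_pow_of_mul_eq {A : Matrix m m R} {B : Matrix n n R} {X : Matrix m n R}
    (h : X * B = A * X) (k : ℕ) : X * B ^ k = A ^ k * X := by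
  induction k with
  | zero => simp
  | succ k ih => rw [pow_succ, ← Matrix.mul_assoc, ih, Matrix.mul_assoc, h, ← Matrix.mul_assoc,
      ← pow_succ]

theorem mul_aeval_of_mul_eq {A : Matrix m m R} {B : Matrix n n R} {X : Matrix m n R}
    (h : X * B = A * X) (p : R[X]) : X * aeval B p = aeval A p * X := by
  induction p using Polynomial.induction_on' with
  | add p q hp hq => rw [map_add, map_add, Matrix.mul_add, Matrix.add_mul, hp, hq]
  | monomial k a =>
    rw [aeval_monomial, aeval_monomial, ← Algebra.smul_def, ← Algebra.smul_def, Matrix.mul_smul,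
      Matrix.smul_mul, mul_pow_of_mul_eq h]

end CommRing

section Field

variable {K : Type*} [Field K] [IsAlgClosed K] {m n : Type*} [Fintype m] [DecidableEq m]
  [Fintype n] [DecidableEq n]

theorem isUnit_aeval_charpoly_of_disjoint_spectrum {A : Matrix m m K} {B : Matrix n n K}
    (hAB : Disjoint (spectrum K A) (spectrum K B)) : IsUnit (aeval A B.charpoly) := by
  by_contra hA
  rw [(IsAlgClosed.splits B.charpoly).eq_prod_roots_of_monic B.charpoly_monic] at hA
  obtain ⟨k, hkA, hkB⟩ := spectrum.exists_mem_of_not_isUnit_aeval_prod hA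
  exact Set.disjoint_left.mp hAB hkA (mem_spectrum_of_isRoot_charpoly hkB)

theorem eq_zero_of_mul_eq_of_disjoint_spectrum {A : Matrix m m K} {B : Matrix n n K}
    {X : Matrix m n K} (hAB : Disjoint (spectrum K A) (spectrum K B)) (h : X * B = A * X) :
    X = 0 := by
  have hunit := (isUnit_iff_isUnit_det _).mp (isUnit_aeval_charpoly_of_disjoint_spectrum hAB)
  have hkill : aeval A B.charpoly * X = 0 := by
    rw [← mul_aeval_of_mul_eq h, aeval_self_charpoly, Matrix.mul_zero]
  rw [← nonsing_inv_mul_cancel_left _ X hunit, hkill, Matrix.mul_zero]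

end Field

end Matrix

theorem IsHurwitz.transpose {n : ℕ} {M : Matrix (Fin n) (Fin n) ℝ} (hM : IsHurwitz M) :
    IsHurwitz Mᵀ := by
  intro μ hμ
  rw [transpose_map, spectrum_transpose] at hμ
  exact hM μ hμ

theorem IsHurwitz.eq_zero_of_mul_add_mul_eq_zero {n k : ℕ} {P : Matrix (Fin n) (Fin n) ℝ}
    {Q : Matrix (Fin k) (Fin k) ℝ} {X : Matrix (Fin n) (Fin k) ℝ} (hP : IsHurwitz P)
    (hQ : IsHurwitz Q) (h : P * X + X * Q = 0) : X = 0 := by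
  have hdisj :
      Disjoint (spectrum ℂ (P.map Complex.ofReal)) (spectrum ℂ (-Q.map Complex.ofReal)) := by
    refine Set.disjoint_left.mpr fun μ hμP hμQ => ?_
    rw [← spectrum.neg_eq, Set.mem_neg] at hμQ
    have hreQ := hQ _ hμQ
    have hreP := hP μ hμP
    rw [Complex.neg_re] at hreQ
    linarith
  have hC : X.map Complex.ofReal * -Q.map Complex.ofReal
      = P.map Complex.ofReal * X.map Complex.ofReal := by
    have h' : (P * X + X * Q).map Complex.ofRealHom = 0 := by simp [h]
    rw [Matrix.map_add _ (map_add _), Matrix.map_mul, Matrix.map_mul] at h'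
    rw [Matrix.mul_neg, neg_eq_iff_add_eq_zero, add_comm]
    exact h'
  exact map_injective Complex.ofReal_injective <|
    (eq_zero_of_mul_eq_of_disjoint_spectrum hdisj hC).trans
      (Matrix.map_zero _ Complex.ofReal_zero).symm

theorem Matrix.transpose_sub_mul_add_mul_sub_eq_zero_of_riccati {K : Type*} [Field K]
    [CharZero K] {m n : Type*} [Fintype m] [DecidableEq m] [Fintype n] [DecidableEq n]
    {A Y : Matrix n n K} {B : Matrix n m K} {R : Matrix m m K} {ρ : K} (hY : Y.IsSymm)
    (hR : R.IsSymm) (hare : ρ • Y = Y * A + Aᵀ * Y - Y * B * R⁻¹ * Bᵀ * Y) :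
    (A - B * R⁻¹ * Bᵀ * Y - (ρ / 2) • 1)ᵀ * Y + Y * (A - (ρ / 2) • 1) = 0 := by
  have hRinv : R⁻¹ᵀ = R⁻¹ := by rw [transpose_nonsing_inv, hR.eq]
  rw [transpose_sub, transpose_sub, transpose_smul, transpose_one, transpose_mul, transpose_mul,
    transpose_mul, transpose_transpose, hY.eq, hRinv]
  simp only [Matrix.sub_mul, Matrix.mul_sub, Matrix.smul_mul, Matrix.mul_smul, Matrix.one_mul,
    Matrix.mul_one, Matrix.mul_assoc] at hare ⊢
  linear_combination (norm := module) -hare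

theorem stmt18_general {n m : ℕ} (A : Matrix (Fin n) (Fin n) ℝ) (B : Matrix (Fin n) (Fin m) ℝ)
    (R : Matrix (Fin m) (Fin m) ℝ) (ρ : ℝ) (hR : R.PosDef)
    (hA : IsHurwitz (A - (ρ / 2) • (1 : Matrix (Fin n) (Fin n) ℝ)))
    (Y : Matrix (Fin n) (Fin n) ℝ) (hY : Y.PosSemidef)
    (hare : ρ • Y = Y * A + Aᵀ * Y - Y * B * R⁻¹ * Bᵀ * Y)
    (hHur : IsHurwitz (A - B * R⁻¹ * Bᵀ * Y - (ρ / 2) • (1 : Matrix (Fin n) (Fin n) ℝ))) :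
    Y = 0 :=
  hHur.transpose.eq_zero_of_mul_add_mul_eq_zero hA <|
    transpose_sub_mul_add_mul_sub_eq_zero_of_riccati
      (isHermitian_iff_isSymm.mp hY.isHermitian) (isHermitian_iff_isSymm.mp hR.isHermitian) hare

theorem stmt18 {n m : ℕ} (A : Matrix (Fin n) (Fin n) ℝ) (B : Matrix (Fin n) (Fin m) ℝ)
    (R : Matrix (Fin m) (Fin m) ℝ) (ρ : ℝ) (hρ : 0 < ρ) (hR : R.PosDef)
    (hA : IsHurwitz (A - (ρ / 2) • (1 : Matrix (Fin n) (Fin n) ℝ)))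
    (Y : Matrix (Fin n) (Fin n) ℝ) (hY : Y.PosSemidef)
    (hare : ρ • Y = Y * A + Aᵀ * Y - Y * B * R⁻¹ * Bᵀ * Y)
    (hHur : IsHurwitz (A - B * R⁻¹ * Bᵀ * Y - (ρ / 2) • (1 : Matrix (Fin n) (Fin n) ℝ))) :
    Y = 0 :=
  stmt18_general A B R ρ hR hA Y hY hare hHur
end
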